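/- Let ψ: ℝⁿ → ℝ ∪ {+∞} be an essentially-continuous convex function with 0 < ∫ e^{-ψ} < +∞, and let μ be its moment measure. Then the support of μ is not contained in any proper linear subspace E ⊊ ℝⁿ. -/

import Mathlib

open MeasureTheory Filter
open scoped ENNReal Topology

noncomputable section

/-- Convexity for `EReal`-valued functions on `ℝⁿ`. -/
def ERealConvexOn {n : ℕ} (ψ : EuclideanSpace ℝ (Fin n) → EReal) : Prop :=
  ∀ x y : EuclideanSpace ℝ (Fin n), ∀ a b : ℝ, 0 ≤ a → 0 ≤ b → a + b = 1 →
    ψ (a • x + b • y) ≤ (a : EReal) * ψ x + (b : EReal) * ψ y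

/-- A convex function `ψ : ℝⁿ → ℝ ∪ {+∞}` is essentially-continuous if it is lower
semi-continuous and its set of discontinuity points has zero `(n-1)`-dimensional
Hausdorff measure. -/
def EssentiallyContinuous {n : ℕ} (ψ : EuclideanSpace ℝ (Fin n) → EReal) : Prop :=
  LowerSemicontinuous ψ ∧
    μH[(n : ℝ) - 1] {x : EuclideanSpace ℝ (Fin n) | ¬ ContinuousAt ψ x} = 0

/-- The measure with density `e^{-ψ}` with respect to Lebesgue measure. -/
def expMeasure {n : ℕ} (ψ : EuclideanSpace ℝ (Fin n) → EReal) :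
    Measure (EuclideanSpace ℝ (Fin n)) :=
  volume.withDensity fun x => (-ψ x).exp

/-- `μ` is the moment measure of `ψ` : the push-forward of `e^{-ψ(x)} dx` under the
(a.e.-defined) gradient map `x ↦ ∇ψ(x)`. -/
def IsMomentMeasure {n : ℕ} (ψ : EuclideanSpace ℝ (Fin n) → EReal)
    (μ : Measure (EuclideanSpace ℝ (Fin n))) : Prop :=
  ∃ g : EuclideanSpace ℝ (Fin n) → EuclideanSpace ℝ (Fin n),
    AEMeasurable g (expMeasure ψ) ∧
      (∀ᵐ x ∂(expMeasure ψ), HasGradientAt (fun y => (ψ y).toReal) (g x) x) ∧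
      μ = (expMeasure ψ).map g

/-- The Legendre transform of `f : ℝⁿ → ℝ ∪ {±∞}`:
`f*(y) = sup { ⟨x,y⟩ - f x : f x < +∞ }`. -/
def legendre {n : ℕ} (f : EuclideanSpace ℝ (Fin n) → EReal) :
    EuclideanSpace ℝ (Fin n) → EReal :=
  fun y => ⨆ x ∈ {x : EuclideanSpace ℝ (Fin n) | f x ≠ ⊤},
    ((inner ℝ x y : ℝ) : EReal) - f x

/-- Integrability of an `EReal`-valued function: a.e. finite with integrable real part. -/
def ERealIntegrable {n : ℕ} (φ : EuclideanSpace ℝ (Fin n) → EReal)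
    (μ : Measure (EuclideanSpace ℝ (Fin n))) : Prop :=
  (∀ᵐ x ∂μ, φ x ≠ ⊤ ∧ φ x ≠ ⊥) ∧ Integrable (fun x => (φ x).toReal) μ

/-- The support of a Borel measure: points all of whose open neighborhoods have
positive measure. -/
def measureSupport {n : ℕ} (μ : Measure (EuclideanSpace ℝ (Fin n))) :
    Set (EuclideanSpace ℝ (Fin n)) :=
  {x | ∀ U : Set (EuclideanSpace ℝ (Fin n)), IsOpen U → x ∈ U → 0 < μ U}

/-- The nonnegative part of an extended real, as an extended nonnegative real. -/
def ERealPos (x : EReal) : ℝ≥0∞ := if x = ⊤ then ⊤ else ENNReal.ofReal x.toReal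

end

/-!
If the support of `μ` lay in a proper subspace `E`, pick a unit vector `θ ⊥ E`: then `∇ψ ⊥ θ`
almost everywhere for `e^{-ψ} dx`. By Fubini, for a set of lines parallel to `θ` whose feet have
positive `(n-1)`-dimensional measure, the restriction `v` of `ψ` satisfies `0 < ∫ e^{-v} < ∞` and
`v' = 0` a.e. on `dom v`. A convex function of one variable with this property is constant on a
dense part of its domain, so integrability forces `dom v ≠ ℝ` and `v` jumps to `+∞` at a boundary
point of `dom v`. Hence every such line meets the discontinuity set of `ψ`; since the projection
along `θ` is `1`-Lipschitz, that set has positive `(n-1)`-dimensional Hausdorff measure.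
-/

open Set

/-- `ERealConvexOn`, on an arbitrary real vector space, so that it can be restricted to lines. -/
def ERealConvex {E : Type*} [AddCommGroup E] [Module ℝ E] (f : E → EReal) : Prop :=
  ∀ x y : E, ∀ a b : ℝ, 0 ≤ a → 0 ≤ b → a + b = 1 →
    f (a • x + b • y) ≤ (a : EReal) * f x + (b : EReal) * f y

namespace ERealConvex

variable {E : Type*} [AddCommGroup E] [Module ℝ E] {f : E → EReal}

lemma comp_line (hf : ERealConvex f) (x θ : E) : ERealConvex fun t : ℝ => f (x + t • θ) := by
  intro s t a b ha hb hab
  convert hf (x + s • θ) (x + t • θ) a b ha hb hab using 2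
  rw [smul_add, smul_add, add_add_add_comm, ← add_smul, hab, one_smul, smul_eq_mul, smul_eq_mul,
    add_smul, mul_smul, mul_smul]

lemma convexOn_toReal (hf : ERealConvex f) (hbot : ∀ x, f x ≠ ⊥) :
    ConvexOn ℝ {x | f x ≠ ⊤} fun x => (f x).toReal := by
  have key : ∀ x ∈ {x | f x ≠ ⊤}, ∀ y ∈ {x | f x ≠ ⊤}, ∀ a b : ℝ, 0 ≤ a → 0 ≤ b → a + b = 1 →
      f (a • x + b • y) ≤ ((a * (f x).toReal + b * (f y).toReal : ℝ) : EReal) := by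
    intro x hx y hy a b ha hb hab
    have h := hf x y a b ha hb hab
    rwa [← EReal.coe_toReal hx (hbot x), ← EReal.coe_toReal hy (hbot y), ← EReal.coe_mul,
      ← EReal.coe_mul, ← EReal.coe_add] at h
  have hdom : Convex ℝ {x | f x ≠ ⊤} := fun x hx y hy a b ha hb hab =>
    ne_top_of_le_ne_top (EReal.coe_ne_top _) (key x hx y hy a b ha hb hab)
  refine ⟨hdom, fun x hx y hy a b ha hb hab => ?_⟩
  have h := EReal.toReal_le_toReal (key x hx y hy a b ha hb hab) (hbot _) (EReal.coe_ne_top _)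
  rwa [EReal.toReal_coe] at h

end ERealConvex

lemma ConvexOn.eq_of_hasDerivAt_zero {S : Set ℝ} {u : ℝ → ℝ} (hu : ConvexOn ℝ S u) {s t : ℝ}
    (hs : s ∈ S) (ht : t ∈ S) (hs' : HasDerivAt u 0 s) (ht' : HasDerivAt u 0 t) : u s = u t := by
  wlog hst : s < t generalizing s t
  · rcases (not_lt.1 hst).eq_or_lt with h | h
    · rw [h]
    · exact (this ht hs ht' hs' h).symm
  have hslope : slope u s t = 0 :=
    le_antisymm (hu.slope_le_of_hasDerivAt hs ht hst ht') (hu.le_slope_of_hasDerivAt hs ht hst hs')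
  rw [slope_def_field, div_eq_zero_iff, sub_eq_zero] at hslope
  exact (hslope.resolve_right (sub_ne_zero.2 hst.ne')).symm

lemma interior_subset_closure_of_measure_diff_eq_zero {X : Type*} [TopologicalSpace X]
    [MeasurableSpace X] {μ : Measure X} [μ.IsOpenPosMeasure] {s t : Set X}
    (h : μ (s \ t) = 0) : interior s ⊆ closure t := by
  intro x hx
  rw [mem_closure_iff]
  intro o ho hxo
  by_contra hempty
  have hsub : o ∩ interior s ⊆ s \ t := fun y hy =>
    ⟨interior_subset hy.2, fun hyt => hempty ⟨y, hy.1, hyt⟩⟩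
  exact ((ho.inter isOpen_interior).measure_ne_zero μ ⟨x, hxo, hx⟩) (measure_mono_null hsub h)

lemma Convex.interior_nonempty_of_measure_ne_zero {E : Type*} [NormedAddCommGroup E]
    [NormedSpace ℝ E] [MeasurableSpace E] [BorelSpace E] [FiniteDimensional ℝ E]
    {μ : Measure E} [μ.IsAddHaarMeasure] {s : Set E} (hs : Convex ℝ s) (h : μ s ≠ 0) :
    (interior s).Nonempty := by
  refine nonempty_iff_ne_empty.2 fun hempty => h (measure_mono_null ?_ (hs.addHaar_frontier μ))
  rw [frontier, hempty, sdiff_empty]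
  exact subset_closure

lemma exists_not_continuousAt_of_eqOn_dense {X : Type*} [TopologicalSpace X]
    [PreconnectedSpace X] {v : X → EReal} {S : Set X} {c : EReal} (hc : c ≠ ⊤)
    (hvS : ∀ x ∈ S, v x = c) (hS : S.Nonempty) (hdense : closure {x | v x ≠ ⊤} ⊆ closure S)
    (htop : ∃ x, v x = ⊤) : ∃ b, ¬ ContinuousAt v b := by
  obtain ⟨s, hs⟩ := hS
  obtain ⟨t, ht⟩ := htop
  obtain ⟨b, hb⟩ : (frontier {x | v x ≠ ⊤}).Nonempty :=
    nonempty_frontier_iff.2 ⟨⟨s, (hvS s hs).trans_ne hc⟩, fun h => (h ▸ mem_univ t) ht⟩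
  refine ⟨b, fun hcont => hc ?_⟩
  have hbc : v b ∈ closure {c} :=
    hcont.continuousWithinAt.mem_closure (hdense (frontier_subset_closure hb)) hvS
  have hbtop : v b ∈ closure {⊤} := hcont.continuousWithinAt.mem_closure
    (frontier_subset_closure (frontier_compl {x | v x ≠ ⊤} ▸ hb)) fun x hx => by simpa using hx
  rw [closure_singleton] at hbc hbtop
  exact hbc.symm.trans hbtop

theorem ERealConvex.exists_not_continuousAt {v : ℝ → EReal} (hv : ERealConvex v)
    (hbot : ∀ t, v t ≠ ⊥) (hmeas : Measurable v)
    (h0 : 0 < ∫⁻ t, (-v t).exp) (h1 : ∫⁻ t, (-v t).exp < ∞)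
    (hcrit : ∀ᵐ t ∂volume.withDensity (fun t => (-v t).exp),
      HasDerivAt (fun s => (v s).toReal) 0 t) :
    ∃ b, ¬ ContinuousAt v b := by
  set J := {t | v t ≠ ⊤}
  set S := {t | t ∈ J ∧ HasDerivAt (fun s => (v s).toReal) 0 t}
  have hJ : MeasurableSet J := (hmeas (measurableSet_singleton ⊤)).compl
  have hconv : Convex ℝ J := (hv.convexOn_toReal hbot).1
  have hF : Measurable fun t => (-v t).exp := hmeas.neg.ereal_exp
  have hexp : ∀ t, (-v t).exp ≠ 0 ↔ t ∈ J := fun t => by simp [J]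
  have hJS : volume (J \ S) = 0 := by
    rw [ae_withDensity_iff hF, ae_iff] at hcrit
    refine measure_mono_null (fun t ht => ?_) hcrit
    exact fun h => ht.2 ⟨ht.1, h ((hexp t).2 ht.1)⟩
  have hint : ∫⁻ t, (-v t).exp = ∫⁻ t in J, (-v t).exp :=
    (setLIntegral_eq_of_support_subset fun t ht => (hexp t).1 ht).symm
  have hJpos : volume J ≠ 0 := fun h => h0.ne' (by rw [hint, Measure.restrict_eq_zero.2 h,
    lintegral_zero_measure])
  obtain ⟨s₀, hs₀⟩ : S.Nonempty :=
    nonempty_of_measure_ne_zero fun hS => hJpos ((measure_sdiff_null hS).symm.trans hJS)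
  have hconst : ∀ t ∈ S, v t = v s₀ := fun t ht => by
    rw [← EReal.coe_toReal ht.1 (hbot t), ← EReal.coe_toReal hs₀.1 (hbot s₀),
      (hv.convexOn_toReal hbot).eq_of_hasDerivAt_zero ht.1 hs₀.1 ht.2 hs₀.2]
  have hJfin : volume J ≠ ∞ := by
    have : ∫⁻ t in J, (-v t).exp = (-v s₀).exp * volume J := by
      rw [← setLIntegral_const]
      refine setLIntegral_congr_fun_ae hJ ?_
      filter_upwards [measure_eq_zero_iff_ae_notMem.1 hJS] with t ht htJ
      rw [hconst t (not_not.1 fun htS => ht ⟨htJ, htS⟩)]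
    exact (ENNReal.lt_top_of_mul_ne_top_right (this ▸ hint ▸ h1.ne) ((hexp s₀).2 hs₀.1)).ne
  refine exists_not_continuousAt_of_eqOn_dense hs₀.1 hconst ⟨s₀, hs₀⟩ ?_ ?_
  · rw [← hconv.closure_interior_eq_closure_of_nonempty_interior
      (hconv.interior_nonempty_of_measure_ne_zero hJpos)]
    exact closure_minimal (interior_subset_closure_of_measure_diff_eq_zero hJS) isClosed_closure
  · by_contra! hfin
    exact hJfin (by rw [(eq_univ_of_forall hfin : J = univ), Real.volume_univ])

lemma HasGradientAt.hasDerivAt_comp_line {E : Type*} [NormedAddCommGroup E]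
    [InnerProductSpace ℝ E] [CompleteSpace E] {f : E → ℝ} {w x θ : E} {t : ℝ}
    (hf : HasGradientAt f w (x + t • θ)) :
    HasDerivAt (fun s : ℝ => f (x + s • θ)) (inner ℝ w θ) t := by
  have hline : HasDerivAt (fun s : ℝ => x + s • θ) θ t := by
    simpa using ((hasDerivAt_id t).smul_const θ).const_add x
  exact (hf.hasFDerivAt.comp_hasDerivAt t hline :)

lemma exists_orthonormalBasis_apply_eq {𝕜 E ι : Type*} [RCLike 𝕜] [NormedAddCommGroup E]
    [InnerProductSpace 𝕜 E] [FiniteDimensional 𝕜 E] [Fintype ι]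
    (card_ι : Module.finrank 𝕜 E = Fintype.card ι) (i : ι) {θ : E} (hθ : ‖θ‖ = 1) :
    ∃ B : OrthonormalBasis ι 𝕜 E, B i = θ := by
  have hon : Orthonormal 𝕜 (({i} : Set ι).domRestrict fun _ => θ) :=
    ⟨fun _ => hθ, fun j k hjk => (hjk (Subsingleton.elim j k)).elim⟩
  obtain ⟨B, hB⟩ := hon.exists_orthonormalBasis_extension_of_card_eq card_ι
  exact ⟨B, hB i rfl⟩

lemma exists_measurePreserving_lineCoordinates {m : ℕ} {θ : EuclideanSpace ℝ (Fin (m + 1))}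
    (hθ : ‖θ‖ = 1) :
    ∃ Ψ : (Fin m → ℝ) × ℝ → EuclideanSpace ℝ (Fin (m + 1)), MeasurePreserving Ψ ∧
      (∀ y t, Ψ (y, t) = Ψ (y, 0) + t • θ) ∧
      ∃ π : EuclideanSpace ℝ (Fin (m + 1)) → (Fin m → ℝ), LipschitzWith 1 π ∧
        ∀ y t, π (Ψ (y, t)) = y := by
  obtain ⟨B, hB⟩ := exists_orthonormalBasis_apply_eq (𝕜 := ℝ) (ι := Fin (m + 1)) (by simp) 0 hθ
  have hcons : ∀ (t : ℝ) (y : Fin m → ℝ),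
      (MeasurableEquiv.piFinSuccAbove (fun _ => ℝ) 0).symm (t, y) = Fin.cons t y :=
    fun t y => by simp; rfl
  refine ⟨B.repr.symm ∘ WithLp.toLp 2 ∘ (MeasurableEquiv.piFinSuccAbove (fun _ => ℝ) 0).symm ∘
    Prod.swap, ?_, fun y t => ?_, fun x => Fin.tail (B.repr x), ?_, fun y t => ?_⟩
  · exact (B.measurePreserving_repr_symm.comp (PiLp.volume_preserving_toLp (Fin (m + 1)))).comp
      ((volume_preserving_piFinSuccAbove (fun _ : Fin (m + 1) => ℝ) 0).symm.comp
        Measure.measurePreserving_swap)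
  · simp only [Function.comp_apply, Prod.swap_prod_mk, hcons]
    rw [← hB, ← B.repr_symm_single, ← map_smul, ← map_add]
    congr 1
    ext j
    cases j using Fin.cases <;> simp
  · have htail : LipschitzWith 1 (Fin.tail : (Fin (m + 1) → ℝ) → Fin m → ℝ) :=
      LipschitzWith.of_edist_le fun x y => edist_pi_le_iff.2 fun j => edist_le_pi_edist x y j.succ
    have h := (htail.comp (PiLp.lipschitzWith_ofLp 2 _)).comp B.repr.lipschitz
    rwa [one_mul, one_mul] at h
  · simp only [Function.comp_apply, Prod.swap_prod_mk, hcons,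
      LinearIsometryEquiv.apply_symm_apply, Fin.tail_cons]

lemma measure_pos_setOf_fiber {α β : Type*} [MeasurableSpace α] [MeasurableSpace β]
    {μ : Measure α} {ν : Measure β} [SFinite ν] {F : α × β → ℝ≥0∞} (hF : Measurable F)
    (h0 : 0 < ∫⁻ z, F z ∂μ.prod ν) (h1 : ∫⁻ z, F z ∂μ.prod ν < ∞) {P : α × β → Prop}
    (hP : ∀ᵐ z ∂(μ.prod ν).withDensity F, P z) :
    0 < μ {x | 0 < ∫⁻ y, F (x, y) ∂ν ∧ ∫⁻ y, F (x, y) ∂ν < ∞ ∧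
      ∀ᵐ y ∂ν.withDensity (fun y => F (x, y)), P (x, y)} := by
  have hI : Measurable fun x => ∫⁻ y, F (x, y) ∂ν := hF.lintegral_prod_right'
  have htot : ∫⁻ x, ∫⁻ y, F (x, y) ∂ν ∂μ = ∫⁻ z, F z ∂μ.prod ν :=
    (lintegral_prod F hF.aemeasurable).symm
  have hfin : ∀ᵐ x ∂μ, ∫⁻ y, F (x, y) ∂ν < ∞ := ae_lt_top hI (htot ▸ h1.ne)
  have hfiber : ∀ᵐ x ∂μ, ∀ᵐ y ∂ν.withDensity (fun y => F (x, y)), P (x, y) := by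
    filter_upwards [Measure.ae_ae_of_ae_prod ((ae_withDensity_iff hF).1 hP)] with x hx
    exact (ae_withDensity_iff (hF.comp measurable_prodMk_left)).2 hx
  refine pos_iff_ne_zero.2 fun hzero => h0.ne' ?_
  rw [← htot, lintegral_eq_zero_iff hI]
  filter_upwards [measure_eq_zero_iff_ae_notMem.1 hzero, hfin, hfiber] with x hx hxfin hxP
  simpa [hxfin, hxP] using hx

lemma LipschitzWith.volume_image_le_hausdorffMeasure {X ι : Type*} [EMetricSpace X]
    [MeasurableSpace X] [BorelSpace X] [Fintype ι] {π : X → ι → ℝ} (hπ : LipschitzWith 1 π)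
    (s : Set X) : volume (π '' s) ≤ μH[Fintype.card ι] s := by
  simpa using hπ.hausdorffMeasure_image_le (Nat.cast_nonneg (Fintype.card ι)) s

lemma ERealConvex.hausdorffMeasure_discontinuities_pos {m : ℕ}
    {ψ : EuclideanSpace ℝ (Fin (m + 1)) → EReal} (hψ : ERealConvex ψ) (hbot : ∀ x, ψ x ≠ ⊥)
    (hmeas : Measurable ψ) (h0 : 0 < ∫⁻ x, (-ψ x).exp) (h1 : ∫⁻ x, (-ψ x).exp < ∞)
    {θ : EuclideanSpace ℝ (Fin (m + 1))} (hθ : ‖θ‖ = 1)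
    (hgrad : ∀ᵐ x ∂expMeasure ψ,
      ∃ w, HasGradientAt (fun y => (ψ y).toReal) w x ∧ inner ℝ w θ = 0) :
    0 < μH[m] {x | ¬ ContinuousAt ψ x} := by
  obtain ⟨Ψ, hΨ, hline, π, hπ, hπΨ⟩ := exists_measurePreserving_lineCoordinates hθ
  have hexp : Measurable fun x => (-ψ x).exp := hmeas.neg.ereal_exp
  have hexpΨ : Measurable fun z => (-ψ (Ψ z)).exp := hexp.comp hΨ.measurable
  have hint : ∫⁻ z, (-ψ (Ψ z)).exp = ∫⁻ x, (-ψ x).exp := hΨ.lintegral_comp hexp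
  have hP : ∀ᵐ z ∂(volume.prod volume).withDensity fun z => (-ψ (Ψ z)).exp,
      HasDerivAt (fun s => (ψ (Ψ (z.1, 0) + s • θ)).toReal) 0 z.2 := by
    rw [expMeasure, ae_withDensity_iff hexp] at hgrad
    rw [ae_withDensity_iff hexpΨ]
    filter_upwards [hΨ.quasiMeasurePreserving.ae hgrad] with z hz hz0
    obtain ⟨w, hw, hwθ⟩ := hz hz0
    rw [hline z.1 z.2] at hw
    simpa [hwθ] using hw.hasDerivAt_comp_line
  refine (measure_pos_setOf_fiber hexpΨ (hint ▸ h0) (hint ▸ h1) hP).trans_le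
    ((measure_mono ?_).trans (by simpa using hπ.volume_image_le_hausdorffMeasure _))
  rintro y ⟨hy0, hy1, hyP⟩
  have hv : ∀ t, ψ (Ψ (y, t)) = ψ (Ψ (y, 0) + t • θ) := fun t => by rw [← hline]
  simp only [hv] at hy0 hy1 hyP
  obtain ⟨t, ht⟩ := (hψ.comp_line (Ψ (y, 0)) θ).exists_not_continuousAt (fun _ => hbot _)
    (hmeas.comp (by fun_prop)) hy0 hy1 hyP
  refine ⟨Ψ (y, t), fun hcont => ht ?_, hπΨ y t⟩
  rw [hline] at hcont
  exact ContinuousAt.comp (f := fun s : ℝ => Ψ (y, 0) + s • θ) hcont (by fun_prop)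

lemma measureSupport_eq_support {n : ℕ} (μ : Measure (EuclideanSpace ℝ (Fin n))) :
    measureSupport μ = μ.support := by
  ext x
  rw [(nhds_basis_opens x).mem_measureSupport]
  exact ⟨fun h U hU => h U hU.2 hU.1, fun h U hU hxU => h U ⟨hxU, hU⟩⟩

lemma Submodule.exists_norm_eq_one_mem_orthogonal {E : Type*} [NormedAddCommGroup E]
    [InnerProductSpace ℝ E] {K : Submodule ℝ E} [K.HasOrthogonalProjection] (hK : K ≠ ⊤) :
    ∃ θ ∈ Kᗮ, ‖θ‖ = 1 := by
  obtain ⟨θ, hθK, hθ⟩ := Submodule.exists_mem_ne_zero_of_ne_bot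
    (mt Submodule.orthogonal_eq_bot_iff.1 hK)
  exact ⟨‖θ‖⁻¹ • θ, Kᗮ.smul_mem _ hθK, norm_smul_inv_norm hθ⟩

/-- the support of the moment measure of an essentially-continuous convex
function (with `0 < ∫ e^{-ψ} < ∞`) is not contained in any proper linear subspace. -/
theorem moment_measure_support_not_in_proper_subspace {n : ℕ}
    (ψ : EuclideanSpace ℝ (Fin n) → EReal) (hbot : ∀ x, ψ x ≠ ⊥)
    (hconv : ERealConvexOn ψ) (hec : EssentiallyContinuous ψ)
    (h0 : 0 < ∫⁻ x, (-ψ x).exp) (h1 : (∫⁻ x, (-ψ x).exp) < ⊤)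
    (μ : MeasureTheory.Measure (EuclideanSpace ℝ (Fin n)))
    (hμ : IsMomentMeasure ψ μ) :
    ∀ E : Submodule ℝ (EuclideanSpace ℝ (Fin n)),
      measureSupport μ ⊆ (E : Set (EuclideanSpace ℝ (Fin n))) → E = ⊤ := by
  intro E hE
  by_contra hne
  obtain ⟨g, hg, hgrad, rfl⟩ := hμ
  obtain ⟨θ, hθE, hθ⟩ := E.exists_norm_eq_one_mem_orthogonal hne
  obtain ⟨m, rfl⟩ : ∃ m, n = m + 1 := Nat.exists_eq_succ_of_ne_zero fun hn => by
    subst hn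
    simp [Subsingleton.elim θ 0] at hθ
  have hgE : ∀ᵐ x ∂expMeasure ψ, g x ∈ E := by
    refine ae_of_ae_map hg (mem_of_superset Measure.support_mem_ae ?_)
    rw [← measureSupport_eq_support]
    exact hE
  have hΔ := ERealConvex.hausdorffMeasure_discontinuities_pos hconv hbot
    hec.1.measurable h0 h1 hθ (by
      filter_upwards [hgrad, hgE] with x hx hxE
      exact ⟨g x, hx, Submodule.inner_right_of_mem_orthogonal hxE hθE⟩)
  exact hΔ.ne' (by simpa using hec.2)
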